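/- arXiv:1308.5544 — 2 statements merged into one kernel-verified Lean document; each statement's English description precedes it below -/
import Mathlib

section
/- For natural numbers n >= 1 and 0 <= k <= n and every real t, cos(t)^{n-k} * sin(t)^k = (1/2^n) * sum_{p=0}^{n-k} sum_{q=0}^{k} C(n-k,p) * C(k,q) * (-1)^{k-q} * cos((2(p+q) - n) * t - k * pi / 2). -/
open Finset Real

/-!
Write `2 cos t = e^{it} + e^{-it}` and `2 sin t = (e^{it} - e^{-it}) e^{-iπ/2}` and expand both powers
by the binomial theorem; the factor `e^{-ikπ/2}` is the phase shift. Taking real parts of the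
resulting exponential sum gives the cosine sum.
-/

namespace Complex

theorem exp_pow_mul_exp_neg_pow (w : ℂ) {p m : ℕ} (hp : p ≤ m) :
    exp w ^ p * exp (-w) ^ (m - p) = exp ((2 * p - m) * w) := by
  rw [← exp_nat_mul, ← exp_nat_mul, ← exp_add]
  push_cast [Nat.cast_sub hp]
  ring_nf

theorem two_mul_cos_pow (z : ℂ) (m : ℕ) :
    (2 * cos z) ^ m = ∑ p ∈ range (m + 1), (m.choose p : ℂ) * exp ((2 * p - m) * z * I) := by
  rw [two_cos, add_pow]
  refine sum_congr rfl fun p hp => ?_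
  rw [neg_mul, exp_pow_mul_exp_neg_pow _ (Nat.le_of_lt_succ (mem_range.mp hp))]
  ring_nf

theorem two_mul_sin_pow (z : ℂ) (k : ℕ) :
    (2 * sin z) ^ k = ∑ q ∈ range (k + 1),
      (k.choose q : ℂ) * (-1) ^ (k - q) * exp (((2 * q - k) * z - k * π / 2) * I) := by
  have two_sin_eq : 2 * sin z = (exp (z * I) + -exp (-(z * I))) * exp (-π / 2 * I) := by
    rw [two_sin, exp_neg_pi_div_two_mul_I]
    ring_nf
  rw [two_sin_eq, mul_pow, add_pow, sum_mul]
  refine sum_congr rfl fun q hq => ?_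
  calc exp (z * I) ^ q * (-exp (-(z * I))) ^ (k - q) * (k.choose q : ℂ) * exp (-π / 2 * I) ^ k
      = k.choose q * (-1) ^ (k - q) *
          (exp (z * I) ^ q * exp (-(z * I)) ^ (k - q) * exp (-π / 2 * I) ^ k) := by ring
    _ = _ := by
      rw [exp_pow_mul_exp_neg_pow _ (Nat.le_of_lt_succ (mem_range.mp hq)), ← exp_nat_mul,
        ← exp_add]
      ring_nf

theorem cos_pow_mul_sin_pow (z : ℂ) (m k : ℕ) :
    cos z ^ m * sin z ^ k = 1 / 2 ^ (m + k) * ∑ p ∈ range (m + 1), ∑ q ∈ range (k + 1),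
      (m.choose p : ℂ) * k.choose q * (-1) ^ (k - q) *
        exp (((2 * (p + q) - (m + k)) * z - k * π / 2) * I) := by
  have halve : cos z ^ m * sin z ^ k = 1 / 2 ^ (m + k) * ((2 * cos z) ^ m * (2 * sin z) ^ k) := by
    field_simp
    ring
  rw [halve, two_mul_cos_pow, two_mul_sin_pow, sum_mul_sum]
  congr 1
  refine sum_congr rfl fun p _ => sum_congr rfl fun q _ => ?_
  rw [mul_mul_mul_comm, ← exp_add]
  ring_nf

end Complex

theorem Real.cos_pow_mul_sin_pow (t : ℝ) (m k : ℕ) :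
    cos t ^ m * sin t ^ k = 1 / 2 ^ (m + k) * ∑ p ∈ range (m + 1), ∑ q ∈ range (k + 1),
      (m.choose p : ℝ) * k.choose q * (-1) ^ (k - q) *
        cos ((2 * (p + q) - (m + k)) * t - k * π / 2) := by
  calc cos t ^ m * sin t ^ k = (Complex.cos t ^ m * Complex.sin t ^ k).re := by norm_cast
    _ = _ := by
      rw [Complex.cos_pow_mul_sin_pow, show (1 / 2 ^ (m + k) : ℂ) = ((1 / 2 ^ (m + k) : ℝ) : ℂ) by
        push_cast; rfl, Complex.re_ofReal_mul, Complex.re_sum]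
      refine congrArg _ (sum_congr rfl fun p _ => ?_)
      rw [Complex.re_sum]
      refine sum_congr rfl fun q _ => ?_
      rw [← Complex.exp_ofReal_mul_I_re, ← Complex.re_ofReal_mul]
      push_cast
      ring_nf

theorem cos_pow_mul_sin_pow_fourier_general (n k : ℕ) (hk : k ≤ n) (t : ℝ) :
    Real.cos t ^ (n - k) * Real.sin t ^ k =
      (1 / 2 ^ n) * ∑ p ∈ range (n - k + 1), ∑ q ∈ range (k + 1),
        ((n - k).choose p : ℝ) * (k.choose q : ℝ) * (-1 : ℝ) ^ (k - q) *
          Real.cos ((2 * ((p : ℝ) + q) - n) * t - k * π / 2) := by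
  obtain ⟨m, rfl⟩ := Nat.exists_eq_add_of_le' hk
  rw [Nat.add_sub_cancel]
  push_cast
  exact Real.cos_pow_mul_sin_pow t m k

/-- Fourier expansion of `cos^{n-k} t · sin^k t`:
`cos(t)^{n-k} sin(t)^k = 2^{-n} ∑_{p=0}^{n-k} ∑_{q=0}^k C(n-k,p) C(k,q) (-1)^{k-q}
cos((2(p+q)-n) t - kπ/2)`. -/
theorem cos_pow_mul_sin_pow_fourier (n k : ℕ) (hn : 1 ≤ n) (hk : k ≤ n) (t : ℝ) :
    Real.cos t ^ (n - k) * Real.sin t ^ k =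
      (1 / 2 ^ n) * ∑ p ∈ range (n - k + 1), ∑ q ∈ range (k + 1),
        ((n - k).choose p : ℝ) * (k.choose q : ℝ) * (-1 : ℝ) ^ (k - q) *
          Real.cos ((2 * ((p : ℝ) + q) - n) * t - k * π / 2) :=
  cos_pow_mul_sin_pow_fourier_general n k hk t
end

section
/- Let n >= 2 be even, let a_0, ..., a_n be nonnegative reals with a_n = omega > 0, let V_0 >= 0, and suppose that for all t >= 0 one has (P(t)/omega)^{n+1} >= ((n+1) Q(t) / omega)^n, where P(t) = sum_{k=0}^n a_k t^k and Q(t) = V_0 + sum_{k=0}^n a_k t^{k+1}/(k+1). Then a_{n-1}^2 >= omega * a_{n-2}. -/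
/-!
Put `s = 1 / t`. The reversed polynomials `u(s) = sⁿ P(1/s) / ω` and
`v(s) = sⁿ⁺¹ (n+1) Q(1/s) / ω` both have constant term `1` (this is `a_n = ω`), and the
hypothesis becomes `vⁿ ≤ uⁿ⁺¹` for `s > 0`. Since `Q' = P`, the `j`-th coefficient of `v` is
`(n+1)/(n+1-j)` times that of `u`, so `uⁿ⁺¹ - vⁿ` vanishes to second order at `s = 0` and its
`s²`-coefficient must be nonnegative. With `b = a_{n-1}/ω`, `c = a_{n-2}/ω` this coefficient is
`(n+1)/(2n(n-1)) · ((n-1)b² - 2nc)`, whence `b² ≥ 2n/(n-1) · c ≥ c`.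
-/

open Finset Polynomial

namespace Polynomial

section LowOrderCoefficients

variable {R : Type*} [CommSemiring R] {f : R[X]}

theorem coeff_pow_zero_of_coeff_zero_eq_one (hf : f.coeff 0 = 1) (k : ℕ) :
    (f ^ k).coeff 0 = 1 := by
  rw [coeff_zero_eq_eval_zero, eval_pow, ← coeff_zero_eq_eval_zero, hf, one_pow]

theorem coeff_pow_one_of_coeff_zero_eq_one (hf : f.coeff 0 = 1) (k : ℕ) :
    (f ^ k).coeff 1 = k * f.coeff 1 := by
  induction k with
  | zero => simp [coeff_one]
  | succ k ih =>
    rw [pow_succ, coeff_mul, Nat.sum_antidiagonal_succ, Nat.antidiagonal_zero, sum_singleton, ih,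
      hf, coeff_pow_zero_of_coeff_zero_eq_one hf]
    push_cast
    ring

theorem coeff_pow_two_of_coeff_zero_eq_one (hf : f.coeff 0 = 1) (k : ℕ) :
    (f ^ k).coeff 2 = k * f.coeff 2 + k.choose 2 * f.coeff 1 ^ 2 := by
  induction k with
  | zero => simp [coeff_one]
  | succ k ih =>
    rw [pow_succ, coeff_mul, Nat.sum_antidiagonal_succ, Nat.sum_antidiagonal_succ,
      Nat.antidiagonal_zero, sum_singleton, ih, hf, coeff_pow_zero_of_coeff_zero_eq_one hf,
      coeff_pow_one_of_coeff_zero_eq_one hf, Nat.choose_succ_succ, Nat.choose_one_right]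
    push_cast
    ring

end LowOrderCoefficients

theorem coeff_nonneg_of_forall_pos_eval_nonneg {f : ℝ[X]} {N : ℕ}
    (hlow : ∀ d < N, f.coeff d = 0) (hpos : ∀ s > 0, 0 ≤ f.eval s) : 0 ≤ f.coeff N := by
  obtain ⟨g, rfl⟩ := X_pow_dvd_iff.mpr hlow
  have hg : ∀ s > 0, 0 ≤ g.eval s := fun s hs => nonneg_of_mul_nonneg_right
    (by simpa only [eval_mul, eval_pow, eval_X] using hpos s hs) (pow_pos hs N)
  rw [coeff_X_pow_mul', if_pos le_rfl, Nat.sub_self, coeff_zero_eq_eval_zero]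
  exact ge_of_tendsto (g.continuous.continuousWithinAt (s := Set.Ioi 0) (x := 0))
    (eventually_nhdsWithin_of_forall hg)

theorem eval_reflect_inv_mul_pow {K : Type*} [Field K] {f : K[X]} {N : ℕ}
    (hf : f.natDegree ≤ N) {x : K} (hx : x ≠ 0) :
    (reflect N f).eval x⁻¹ * x ^ N = f.eval x := by
  let _ := invertibleOfNonzero hx
  simpa only [invOf_eq_inv, eval₂_id] using eval₂_reflect_mul_pow (RingHom.id K) x N f hf

theorem pow_eval_reflect_le_of_pow_eval_le {f g : ℝ[X]} {n : ℕ} (hf : f.natDegree ≤ n)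
    (hg : g.natDegree ≤ n + 1) (h : ∀ t > 0, g.eval t ^ n ≤ f.eval t ^ (n + 1)) {s : ℝ}
    (hs : 0 < s) : (reflect (n + 1) g).eval s ^ n ≤ (reflect n f).eval s ^ (n + 1) := by
  have ht : 0 < s⁻¹ := inv_pos.mpr hs
  have h := h s⁻¹ ht
  rw [← eval_reflect_inv_mul_pow hf ht.ne', ← eval_reflect_inv_mul_pow hg ht.ne', inv_inv,
    mul_pow, mul_pow, ← pow_mul, ← pow_mul, mul_comm (n + 1) n] at h
  exact le_of_mul_le_mul_right h (by positivity)

end Polynomial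

theorem two_mul_coeff_two_le_of_pow_le_pow {n : ℕ} (hn : 2 ≤ n) {u v : ℝ[X]}
    (hu0 : u.coeff 0 = 1) (hv0 : v.coeff 0 = 1)
    (hv1 : v.coeff 1 = (n + 1) / n * u.coeff 1)
    (hv2 : v.coeff 2 = (n + 1) / (n - 1) * u.coeff 2)
    (hle : ∀ s > 0, v.eval s ^ n ≤ u.eval s ^ (n + 1)) :
    2 * n * u.coeff 2 ≤ (n - 1) * u.coeff 1 ^ 2 := by
  have hn2 : (2 : ℝ) ≤ n := by exact_mod_cast hn
  have hn0 : (n : ℝ) ≠ 0 := by positivity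
  have hn1 : (n : ℝ) - 1 ≠ 0 := by linarith
  have hD := coeff_nonneg_of_forall_pos_eval_nonneg (f := u ^ (n + 1) - v ^ n) (N := 2)
    (fun d hd => by
      interval_cases d
      · simp only [coeff_sub, coeff_pow_zero_of_coeff_zero_eq_one, hu0, hv0, sub_self]
      · simp only [coeff_sub, coeff_pow_one_of_coeff_zero_eq_one, hu0, hv0, hv1, Nat.cast_add,
          Nat.cast_one]
        field_simp
        ring)
    (fun s hs => by simpa only [eval_sub, eval_pow, sub_nonneg] using hle s hs)
  rw [coeff_sub, coeff_pow_two_of_coeff_zero_eq_one hu0, coeff_pow_two_of_coeff_zero_eq_one hv0,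
    hv1, hv2, Nat.cast_choose_two, Nat.cast_choose_two] at hD
  have hfactor :
      0 ≤ (n + 1) / (2 * n * (n - 1)) * ((n - 1) * u.coeff 1 ^ 2 - 2 * n * u.coeff 2) := by
    convert hD using 1
    push_cast
    field_simp
    ring
  have hpos : (0 : ℝ) < (n + 1) / (2 * n * (n - 1)) := by
    apply div_pos <;> nlinarith
  exact sub_nonneg.mp (nonneg_of_mul_nonneg_right hfactor hpos)

section ParallelHypersurfaces

variable (n : ℕ) (a : ℕ → ℝ) (ω V₀ : ℝ)

noncomputable def areaPoly : ℝ[X] :=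
  ∑ k ∈ range (n + 1), C (a k / ω) * X ^ k

noncomputable def volumePoly : ℝ[X] :=
  C ((n + 1) * V₀ / ω) +
    ∑ k ∈ range (n + 1), C ((n + 1) / (k + 1) * (a k / ω)) * X ^ (k + 1)

theorem eval_areaPoly (t : ℝ) :
    (areaPoly n a ω).eval t = (∑ k ∈ range (n + 1), a k * t ^ k) / ω := by
  simp only [areaPoly, eval_finsetSum, eval_mul, eval_C, eval_pow, eval_X, div_mul_eq_mul_div,
    sum_div]

theorem eval_volumePoly (t : ℝ) :
    (volumePoly n a ω V₀).eval t =
      ((n : ℝ) + 1) * (V₀ + ∑ k ∈ range (n + 1), a k * t ^ (k + 1) / (k + 1)) / ω := by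
  simp only [volumePoly, eval_add, eval_C, eval_finsetSum, eval_mul, eval_pow, eval_X]
  rw [mul_add, add_div, Finset.mul_sum, Finset.sum_div]
  congr 1
  refine Finset.sum_congr rfl fun k _ => ?_
  field_simp

theorem natDegree_areaPoly_le : (areaPoly n a ω).natDegree ≤ n :=
  natDegree_sum_le_of_forall_le _ _ fun _ hk =>
    (natDegree_C_mul_X_pow_le _ _).trans (Nat.lt_succ_iff.mp (mem_range.mp hk))

theorem natDegree_volumePoly_le : (volumePoly n a ω V₀).natDegree ≤ n + 1 :=
  natDegree_add_le_of_degree_le ((natDegree_C _).trans_le (Nat.zero_le _)) <|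
    natDegree_sum_le_of_forall_le _ _ fun _ hk =>
      (natDegree_C_mul_X_pow_le _ _).trans
        (Nat.succ_le_succ (Nat.lt_succ_iff.mp (mem_range.mp hk)))

theorem coeff_reflect_areaPoly {j : ℕ} (hj : j ≤ n) :
    (reflect n (areaPoly n a ω)).coeff j = a (n - j) / ω := by
  rw [coeff_reflect, revAt_le hj, areaPoly, finsetSum_coeff]
  simp only [coeff_C_mul_X_pow]
  rw [Finset.sum_ite_eq, if_pos (mem_range.mpr (by omega))]

theorem coeff_reflect_volumePoly {j : ℕ} (hj : j ≤ n) :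
    (reflect (n + 1) (volumePoly n a ω V₀)).coeff j =
      (n + 1) / ((n - j : ℕ) + 1) * (a (n - j) / ω) := by
  rw [coeff_reflect, revAt_le (by omega), show n + 1 - j = n - j + 1 by omega, volumePoly,
    coeff_add, coeff_C_succ, zero_add, finsetSum_coeff]
  simp only [coeff_C_mul_X_pow, add_left_inj]
  rw [Finset.sum_ite_eq, if_pos (mem_range.mpr (by omega))]

end ParallelHypersurfaces

theorem next_coefficients_even_general (n : ℕ) (hn : 2 ≤ n) (a : ℕ → ℝ)
    (ha : ∀ k ≤ n, 0 ≤ a k) (ω : ℝ) (hω : 0 < ω) (han : a n = ω)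
    (V₀ : ℝ)
    (hiso : ∀ t : ℝ, 0 ≤ t →
      (((n : ℝ) + 1) * (V₀ + ∑ k ∈ range (n + 1), a k * t ^ (k + 1) / (k + 1)) / ω) ^ n ≤
        ((∑ k ∈ range (n + 1), a k * t ^ k) / ω) ^ (n + 1)) :
    ω * a (n - 2) ≤ a (n - 1) ^ 2 := by
  have hu : ∀ j ≤ n, (reflect n (areaPoly n a ω)).coeff j = a (n - j) / ω :=
    fun j => coeff_reflect_areaPoly n a ω
  have hv : ∀ j ≤ n, (reflect (n + 1) (volumePoly n a ω V₀)).coeff j =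
      (n + 1) / ((n - j : ℕ) + 1) * (a (n - j) / ω) :=
    fun j => coeff_reflect_volumePoly n a ω V₀
  have key := two_mul_coeff_two_le_of_pow_le_pow hn
    (by rw [hu 0 (by omega), Nat.sub_zero, han, div_self hω.ne'])
    (by rw [hv 0 (by omega), Nat.sub_zero, han, div_self hω.ne']; field_simp)
    (by rw [hv 1 (by omega), hu 1 (by omega), Nat.cast_sub (by omega)]; push_cast; ring_nf)
    (by rw [hv 2 (by omega), hu 2 (by omega), Nat.cast_sub hn]; push_cast; ring_nf)
    (fun s hs => pow_eval_reflect_le_of_pow_eval_le (natDegree_areaPoly_le n a ω)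
      (natDegree_volumePoly_le n a ω V₀)
      (fun t ht => by simpa only [eval_areaPoly, eval_volumePoly] using hiso t ht.le) hs)
  rw [hu 1 (by omega), hu 2 (by omega)] at key
  have hn2 : (2 : ℝ) ≤ n := by exact_mod_cast hn
  have hc : 0 ≤ a (n - 2) := ha (n - 2) (by omega)
  field_simp at key
  nlinarith

/-- Abstract form of the Euclidean isoperimetric inequality applied to parallel
hypersurfaces, even-dimensional case: comparing the next coefficients yields
the Alexandrov-Fenchel inequality `a_{n-1}² ≥ ω a_{n-2}`. -/
theorem next_coefficients_even (n : ℕ) (hn : 2 ≤ n) (hneven : Even n) (a : ℕ → ℝ)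
    (ha : ∀ k ≤ n, 0 ≤ a k) (ω : ℝ) (hω : 0 < ω) (han : a n = ω)
    (V₀ : ℝ) (hV₀ : 0 ≤ V₀)
    (hiso : ∀ t : ℝ, 0 ≤ t →
      (((n : ℝ) + 1) * (V₀ + ∑ k ∈ range (n + 1), a k * t ^ (k + 1) / (k + 1)) / ω) ^ n ≤
        ((∑ k ∈ range (n + 1), a k * t ^ k) / ω) ^ (n + 1)) :
    ω * a (n - 2) ≤ a (n - 1) ^ 2 :=
  next_coefficients_even_general n hn a ha ω hω han V₀ hiso
end
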